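/- Let n ≥ 2 and let {D_α} be a finite collection of differences centered at c, each of order strictly greater than n. Then there exists a measurable function f that is (n−1) times Peano differentiable at c, satisfies D_α(h)(f) = 0 for all α and all h, but is not n times Peano differentiable at c. -/

import Mathlib

open Filter Topology Asymptotics Finset

/-- `f` is `m` times Peano differentiable at `c`: there is a polynomial `p` of degree
at most `m` with `f (c + h) - p (c + h) = o(hᵐ)` as `h → 0`. -/
def PeanoDifferentiable (m : ℕ) (f : ℝ → ℝ) (c : ℝ) : Prop :=
  ∃ p : Polynomial ℝ, p.degree ≤ (m : ℕ∞) ∧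
    (fun h : ℝ => f (c + h) - p.eval (c + h)) =o[𝓝[≠] (0:ℝ)] fun h => h ^ m

/-- A difference centered at `c`: nonzero coefficients and distinct nodes. -/
structure DifferenceAt (c : ℝ) where
  m : ℕ
  a : Fin (m + 1) → ℝ
  b : Fin (m + 1) → ℝ
  a_ne : ∀ i, a i ≠ 0
  b_inj : Function.Injective b

/-- The value of the difference applied to `f` at increment `h`. -/
def DifferenceAt.apply {c : ℝ} (D : DifferenceAt c) (f : ℝ → ℝ) (h : ℝ) : ℝ :=
  ∑ i, D.a i * f (c + D.b i * h)

/-- The difference has order at least `n`. -/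
def DifferenceAt.orderAtLeast {c : ℝ} (D : DifferenceAt c) (n : ℕ) : Prop :=
  ∀ k < n, ∑ i, D.a i * D.b i ^ k = 0

/-!
Let `S` be the image in `ℝ` of the multiplicative group generated by the nonzero nodes (and `2`),
and put `f (c + h) = hⁿ` for `h ∈ S`, `f (c + h) = 0` otherwise. Multiplication by a nonzero node
preserves both `S` and its complement, so every term of `D(h) f` is `aᵢ bᵢⁿ f (c + h)`, and the
sum vanishes since `∑ aᵢ bᵢⁿ = 0`. As `|f (c + h)| ≤ |h|ⁿ`, `f` is `(n-1)` times Peano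
differentiable with polynomial `0`. The set `S` is countable, so its complement accumulates at
`0`; there an `n`-th Peano polynomial would be `o(hⁿ)`, hence zero, and then along `S`, which
also accumulates at `0`, we would get `hⁿ = o(hⁿ)`.
-/

open Polynomial

theorem Subgroup.countable_closure {G : Type*} [Group G] {s : Set G} (hs : s.Countable) :
    (closure s : Set G).Countable := by
  have := hs.to_subtype
  rw [FreeGroup.closure_eq_range, MonoidHom.coe_range]
  exact Set.countable_range _

theorem Subgroup.mul_mem_image_val_iff {M : Type*} [Monoid M] {G : Subgroup Mˣ} {u : Mˣ}
    (hu : u ∈ G) {x : M} :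
    (u : M) * x ∈ Units.val '' (G : Set Mˣ) ↔ x ∈ Units.val '' (G : Set Mˣ) := by
  constructor
  · rintro ⟨v, hv, hvx⟩
    exact ⟨u⁻¹ * v, G.mul_mem (G.inv_mem hu) hv, by simp [hvx]⟩
  · rintro ⟨v, hv, rfl⟩
    exact ⟨u * v, G.mul_mem hu hv, rfl⟩

theorem Polynomial.eq_zero_of_isLittleO_pow {𝕜 : Type*} [NormedField 𝕜] {l : Filter 𝕜} [l.NeBot]
    (hl : l ≤ 𝓝[≠] 0) {n : ℕ} {Q : 𝕜[X]} (hQ : Q.natDegree ≤ n)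
    (hlo : (fun x => Q.eval x) =o[l] (· ^ n)) : Q = 0 := by
  have hx : ∀ᶠ x in l, x ≠ 0 := hl self_mem_nhdsWithin
  have hcoeff {m : ℕ} {P : 𝕜[X]} (hP : (fun x => P.eval x) =o[l] (· ^ m)) : P.coeff 0 = 0 := by
    have hpow : (fun x : 𝕜 => x ^ m) =O[l] (fun _ => (1 : 𝕜)) :=
      (((continuous_pow m).tendsto 0).mono_left (hl.trans nhdsWithin_le_nhds)).isBigO_one 𝕜
    rw [coeff_zero_eq_eval_zero]
    exact tendsto_nhds_unique ((P.continuous.tendsto 0).mono_left (hl.trans nhdsWithin_le_nhds))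
      (isLittleO_one_iff 𝕜 |>.mp (hP.trans_isBigO hpow))
  induction n generalizing Q with
  | zero => rw [eq_C_of_natDegree_le_zero hQ, hcoeff hlo, C_0]
  | succ n ih =>
    obtain ⟨R, rfl⟩ := X_dvd_iff.mpr (hcoeff hlo)
    rcases eq_or_ne R 0 with rfl | hR
    · simp
    refine absurd (ih ?_ ?_) hR
    · rw [natDegree_mul X_ne_zero hR, natDegree_X] at hQ
      omega
    · refine ((isBigO_refl (fun x : 𝕜 => x⁻¹) l).mul_isLittleO hlo).congr' ?_ ?_
      · filter_upwards [hx] with x hx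
        rw [eval_mul, eval_X, inv_mul_cancel_left₀ hx]
      · filter_upwards [hx] with x hx
        rw [pow_succ', inv_mul_cancel_left₀ hx]

theorem peanoDifferentiable_of_isBigO_pow {f : ℝ → ℝ} {c : ℝ} {m n : ℕ} (hmn : m < n)
    (hf : (fun h => f (c + h)) =O[𝓝[≠] 0] (· ^ n)) : PeanoDifferentiable m f c :=
  ⟨0, degree_zero.trans_le bot_le,
    by simpa using hf.trans_isLittleO ((isLittleO_pow_pow hmn).mono nhdsWithin_le_nhds)⟩

noncomputable def powIndicator (S : Set ℝ) (n : ℕ) (c x : ℝ) : ℝ :=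
  S.indicator (· ^ n) (x - c)

section powIndicator

variable {S : Set ℝ} {n : ℕ} {c : ℝ}

theorem powIndicator_add (h : ℝ) : powIndicator S n c (c + h) = S.indicator (· ^ n) h := by
  simp [powIndicator]

theorem measurable_powIndicator (hS : MeasurableSet S) : Measurable (powIndicator S n c) :=
  ((measurable_id.pow_const n).indicator hS).comp (measurable_id.sub_const c)

theorem isBigO_powIndicator (l : Filter ℝ) :
    (fun h => powIndicator S n c (c + h)) =O[l] (· ^ n) :=
  isBigO_of_le l fun h => by simpa only [powIndicator_add] using norm_indicator_le_norm_self _ _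

theorem DifferenceAt.apply_powIndicator_eq_zero (D : DifferenceAt c) (hn : n ≠ 0) (h0 : 0 ∉ S)
    (hS : ∀ i, D.b i ≠ 0 → ∀ h, D.b i * h ∈ S ↔ h ∈ S) (hD : ∑ i, D.a i * D.b i ^ n = 0)
    (h : ℝ) : D.apply (powIndicator S n c) h = 0 := by
  have hterm (i) : powIndicator S n c (c + D.b i * h) = D.b i ^ n * S.indicator (· ^ n) h := by
    rw [powIndicator_add]
    by_cases hb : D.b i = 0
    · simp [hb, h0, hn]
    · by_cases hh : h ∈ S <;> simp [Set.indicator, hh, hS i hb h, mul_pow]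
  simp_rw [DifferenceAt.apply, hterm, ← mul_assoc, ← Finset.sum_mul, hD, zero_mul]

theorem not_peanoDifferentiable_powIndicator (hS : S.Countable) (h0 : 0 ∉ S)
    (hacc : (0 : ℝ) ∈ closure S) : ¬ PeanoDifferentiable n (powIndicator S n c) c := by
  rintro ⟨p, hp, hlo⟩
  set Q : ℝ[X] := p.comp (X + C c)
  have hQ (h : ℝ) : Q.eval h = p.eval (c + h) := by simp [Q, add_comm]
  have hQdeg : Q.natDegree ≤ n := by
    rw [natDegree_comp, natDegree_X_add_C, mul_one]
    exact natDegree_le_iff_degree_le.mpr hp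
  have hQ0 : Q = 0 := by
    have hsub : (insert 0 S)ᶜ ⊆ {0}ᶜ :=
      Set.compl_subset_compl.mpr (Set.singleton_subset_iff.mpr (Set.mem_insert 0 S))
    have : (𝓝[(insert 0 S)ᶜ] (0 : ℝ)).NeBot :=
      mem_closure_iff_nhdsWithin_neBot.mp ((hS.insert 0).dense_compl ℝ 0)
    refine eq_zero_of_isLittleO_pow (nhdsWithin_mono 0 hsub) hQdeg ?_
    refine (hlo.mono (nhdsWithin_mono 0 hsub)).neg_left.congr' ?_ EventuallyEq.rfl
    filter_upwards [self_mem_nhdsWithin] with h hh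
    simp_all [powIndicator_add]
  have hS0 : S ⊆ {0}ᶜ := fun h hh => ne_of_mem_of_not_mem hh h0
  have : (𝓝[S] (0 : ℝ)).NeBot := mem_closure_iff_nhdsWithin_neBot.mp hacc
  refine isLittleO_irrefl (l := 𝓝[S] 0) (f'' := fun h : ℝ => h ^ n) ?_ ?_
  · refine Eventually.frequently ?_
    filter_upwards [self_mem_nhdsWithin] with h hh using pow_ne_zero _ (hS0 hh)
  · refine (hlo.mono (nhdsWithin_mono 0 hS0)).congr' ?_ EventuallyEq.rfl
    filter_upwards [self_mem_nhdsWithin] with h hh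
    simp [powIndicator_add, hh, ← hQ, hQ0]

end powIndicator

section nodeSet

variable {c : ℝ} {ι : Type*} (D : ι → DifferenceAt c)

/-- The generator `2` makes the group accumulate at `0` even when no node has absolute value
other than `1` (e.g. for `ι` empty). -/
noncomputable def nodeGroup : Subgroup ℝˣ :=
  Subgroup.closure (insert (Units.mk0 2 two_ne_zero)
    (Units.val ⁻¹' Set.range fun p : (α : ι) × Fin ((D α).m + 1) => (D p.1).b p.2))

def nodeSet : Set ℝ := Units.val '' (nodeGroup D : Set ℝˣ)

theorem countable_nodeSet [Countable ι] : (nodeSet D).Countable :=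
  (Subgroup.countable_closure
    (((Set.countable_range _).preimage Units.val_injective).insert _)).image _

theorem zero_notMem_nodeSet : (0 : ℝ) ∉ nodeSet D := by
  rintro ⟨u, -, hu⟩
  exact u.ne_zero hu

theorem node_mul_mem_nodeSet_iff {α : ι} {i : Fin ((D α).m + 1)} (hb : (D α).b i ≠ 0) (h : ℝ) :
    (D α).b i * h ∈ nodeSet D ↔ h ∈ nodeSet D := by
  refine Subgroup.mul_mem_image_val_iff (u := Units.mk0 _ hb) (Subgroup.subset_closure ?_)
  exact Set.mem_insert_of_mem _ ⟨⟨α, i⟩, rfl⟩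

theorem zero_mem_closure_nodeSet : (0 : ℝ) ∈ closure (nodeSet D) := by
  refine mem_closure_of_tendsto (tendsto_pow_atTop_nhds_zero_of_lt_one
    (by norm_num : (0 : ℝ) ≤ 2⁻¹) (by norm_num)) (Eventually.of_forall fun k => ?_)
  exact ⟨(Units.mk0 2 two_ne_zero)⁻¹ ^ k,
    pow_mem (inv_mem (Subgroup.subset_closure (Set.mem_insert _ _))) k, by simp⟩

end nodeSet

/-- For a finite collection of differences of order greater than `n ≥ 2` centered at `c`,
there is a measurable function, `(n-1)` times Peano differentiable at `c`, killed by
every difference in the collection, which is not `n` times Peano differentiable at `c`. -/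
theorem exists_killed_function_order_gt_n (n : ℕ) (hn : 2 ≤ n) (c : ℝ)
    (ι : Type) [Fintype ι] (D : ι → DifferenceAt c)
    (hord : ∀ α, (D α).orderAtLeast (n + 1)) :
    ∃ f : ℝ → ℝ, Measurable f ∧ PeanoDifferentiable (n - 1) f c ∧
      (∀ α, ∀ h : ℝ, (D α).apply f h = 0) ∧ ¬ PeanoDifferentiable n f c :=
  ⟨powIndicator (nodeSet D) n c,
    measurable_powIndicator (countable_nodeSet D).measurableSet,
    peanoDifferentiable_of_isBigO_pow (by omega) (isBigO_powIndicator _),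
    fun α => (D α).apply_powIndicator_eq_zero (by omega) (zero_notMem_nodeSet D)
      (fun _ hb => node_mul_mem_nodeSet_iff D hb) (hord α n n.lt_succ_self),
    not_peanoDifferentiable_powIndicator (countable_nodeSet D) (zero_notMem_nodeSet D)
      (zero_mem_closure_nodeSet D)⟩
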